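/- arXiv:1804.00279 — 2 statements merged into one kernel-verified Lean document; each statement's English description precedes it below -/
import Mathlib

section
/- The following are equivalent: (i) there is a set S ⊆ G₁⧸N₃ with R¹_1 ∘ R²_1 = ⋃_{c∈S} R³_c (where 1 denotes the identity of the respective quotient group); (ii) for all a ∈ G₁⧸N₁ and b ∈ G₂⧸N₂ there is a set S ⊆ G₁⧸N₃ with R¹_a ∘ R²_b = ⋃_{c∈S} R³_c; (iii) for all a ∈ G₁⧸N₁ and b ∈ G₂⧸N₂, R¹_a ∘ R²_b = ⋃{R³_c : c ∈ G₁⧸N₃, ⟨c⟩ ⊆ φ₁⁻¹[⟨φ₁(a)⟩·⟨b⟩]}; (iv) (N₃ as a subset of G₁) ⊆ φ₁⁻¹[M₁·N₂], and for all g ∈ G₁, h ∈ G₂ and k, k′ ∈ G₃ with φ₁([g]_{N₁}) = [h]_{M₁}, φ₂([h]_{N₂}) = [k]_{M₂} and φ₃([g]_{N₃}) = [k′]_{M₃}, one has k⁻¹·k′ ∈ φ₂[M₁·N₂] (this last condition expresses that the maps induced by φ₁, φ₂, φ₃ on the quotients modulo φ₁⁻¹[M₁·N₂], M₁·N₂ and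 φ₂[M₁·N₂] satisfy: φ₁-induced followed by φ₂-induced equals φ₃-induced). (Composition Theorem.) -/
/-!
Write `Γ_φ = {(g, h) | φ [g] = [h]}` for the graph of a quotient isomorphism `φ`. It is a
subgroup of `G × G'` with surjective projections, meeting `G × 1` in `N × 1` and `1 × G'` in
`1 × M`, and the atom `R_a` is `{p | p · (a, 1) ∈ Γ_φ}`. The composite `Δ = Γ_{φ₁} ∘ Γ_{φ₂}` is
again a subgroup of `G₁ × G₃`; every `R¹_a ∘ R²_b` has the form `{p | p · (t, 1) ∈ Δ}`, and `Δ`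
meets `G₁ × 1` in `φ₁⁻¹[M₁N₂] × 1` and `1 × G₃` in `1 × φ₂[M₁N₂]`. All four conditions are
equivalent to `Γ_{φ₃} ≤ Δ`: a union of atoms `R³_c` that contains `(1, 1)` contains `R³_1 = Γ_{φ₃}`,
and when `Γ_{φ₃} ≤ Δ` the set `{p | p · (t, 1) ∈ Δ}` is the union of the atoms `R³_c` with
`c ∈ t · φ₁⁻¹[M₁N₂]`.
-/

open scoped Pointwise

namespace CosetRA

variable {G G' : Type*}

/-- The coset of `a : G ⧸ N` as a subset of `G`: `⟨a⟩ = {g : G | [g]_N = a}`. -/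
def cosetOf [Group G] (N : Subgroup G) (a : G ⧸ N) : Set G :=
  {g : G | (g : G ⧸ N) = a}

/-- Forward image `φ[S]` of a subset `S ⊆ G` under a quotient isomorphism. -/
def fwd [Group G] [Group G'] (N : Subgroup G) (M : Subgroup G')
    [N.Normal] [M.Normal] (φ : G ⧸ N ≃* G' ⧸ M) (S : Set G) : Set G' :=
  {h : G' | ∃ g ∈ S, φ (g : G ⧸ N) = (h : G' ⧸ M)}

/-- Inverse image `φ⁻¹[S']` of a subset `S' ⊆ G'` under a quotient isomorphism. -/
def bwd [Group G] [Group G'] (N : Subgroup G) (M : Subgroup G')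
    [N.Normal] [M.Normal] (φ : G ⧸ N ≃* G' ⧸ M) (S' : Set G') : Set G :=
  {g : G | ∃ h ∈ S', φ (g : G ⧸ N) = (h : G' ⧸ M)}

/-- The atomic relation `R_a = {(g,h) : [h]_M = φ([g]_N)·φ(a)}`. -/
def atom [Group G] [Group G'] (N : Subgroup G) (M : Subgroup G')
    [N.Normal] [M.Normal] (φ : G ⧸ N ≃* G' ⧸ M) (a : G ⧸ N) : Set (G × G') :=
  {p : G × G' | (p.2 : G' ⧸ M) = φ (p.1 : G ⧸ N) * φ a}

/-- Converse of a relation: `R˘ = {(v,u) : (u,v) ∈ R}`. -/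
def conv {α β : Type*} (R : Set (α × β)) : Set (β × α) := {p | (p.2, p.1) ∈ R}

/-- Relational composition `R ∘ S`. -/
def rcomp {α β γ : Type*} (R : Set (α × β)) (S : Set (β × γ)) : Set (α × γ) :=
  {p | ∃ v, (p.1, v) ∈ R ∧ (v, p.2) ∈ S}

/-- `C` is a left coset of the set `P`. -/
def IsLeftCosetSet [Group G] (P C : Set G) : Prop := ∃ g : G, C = g • P

/-- `Q` is a union of left cosets of the set `P`. -/
def IsUnionOfCosets [Group G] (P Q : Set G) : Prop := ∀ g ∈ Q, g • P ⊆ Q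

/-- The union of all atomic relations `R_c` with `⟨c⟩ ⊆ K`. -/
def unionAtoms [Group G] [Group G'] (N : Subgroup G) (M : Subgroup G')
    [N.Normal] [M.Normal] (φ : G ⧸ N ≃* G' ⧸ M) (K : Set G) : Set (G × G') :=
  ⋃ c ∈ {c : G ⧸ N | cosetOf N c ⊆ K}, atom N M φ c

def graph [Group G] [Group G'] (N : Subgroup G) (M : Subgroup G') [N.Normal] [M.Normal]
    (φ : G ⧸ N ≃* G' ⧸ M) : Subgroup (G × G') :=
  (φ.toMonoidHom.graph).comap ((QuotientGroup.mk' N).prodMap (QuotientGroup.mk' M))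

def rcompSubgroup {α β γ : Type*} [Group α] [Group β] [Group γ]
    (A : Subgroup (α × β)) (B : Subgroup (β × γ)) : Subgroup (α × γ) where
  carrier := rcomp (A : Set (α × β)) (B : Set (β × γ))
  one_mem' := ⟨1, A.one_mem, B.one_mem⟩
  mul_mem' := by
    rintro ⟨a, c⟩ ⟨a', c'⟩ ⟨b, hab, hbc⟩ ⟨b', hab', hbc'⟩
    exact ⟨b * b', A.mul_mem hab hab', B.mul_mem hbc hbc'⟩
  inv_mem' := by
    rintro ⟨a, c⟩ ⟨b, hab, hbc⟩
    exact ⟨b⁻¹, A.inv_mem hab, B.inv_mem hbc⟩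

theorem mem_rcompSubgroup {α β γ : Type*} [Group α] [Group β] [Group γ]
    {A : Subgroup (α × β)} {B : Subgroup (β × γ)} {p : α × γ} :
    p ∈ rcompSubgroup A B ↔ ∃ v, (p.1, v) ∈ A ∧ (v, p.2) ∈ B :=
  Iff.rfl

theorem cosetOf_mul_cosetOf [Group G] (M N : Subgroup G) [M.Normal] (u v : G) :
    cosetOf M (u : G ⧸ M) * cosetOf N (v : G ⧸ N) = (u * v) • ((M : Set G) * N) := by
  ext x
  rw [mem_leftCoset_iff]
  constructor
  · rintro ⟨y, hy, z, hz, rfl⟩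
    have hy : u⁻¹ * y ∈ M := QuotientGroup.eq.mp hy.symm
    have hz : v⁻¹ * z ∈ N := QuotientGroup.eq.mp hz.symm
    have : (u * v)⁻¹ * (y * z) = (v⁻¹ * (u⁻¹ * y) * v⁻¹⁻¹) * (v⁻¹ * z) := by group
    rw [this]
    exact Set.mul_mem_mul (Subgroup.Normal.conj_mem ‹_› _ hy _) hz
  · rintro ⟨m, hm, n, hn, hmn⟩
    refine ⟨u * (v * m * v⁻¹), ?_, v * n, ?_, ?_⟩
    · rw [cosetOf, Set.mem_ofPred_eq, QuotientGroup.mk_mul,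
        (QuotientGroup.eq_one_iff _).mpr (Subgroup.Normal.conj_mem ‹_› _ hm v), mul_one]
    · exact QuotientGroup.eq.mpr (by simpa using inv_mem hn)
    · dsimp only at hmn
      rw [← mul_inv_cancel_left (u * v) x, ← hmn]
      group

section Graph

variable [Group G] [Group G'] {N : Subgroup G} {M : Subgroup G'} [N.Normal] [M.Normal]
  (φ : G ⧸ N ≃* G' ⧸ M)

@[simp]
theorem mk_mem_graph {g : G} {h : G'} : (g, h) ∈ graph N M φ ↔ φ g = h := Iff.rfl

theorem mk_one_mem_graph {g : G} : (g, 1) ∈ graph N M φ ↔ g ∈ N := by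
  rw [mk_mem_graph, QuotientGroup.mk_one, ← map_one φ, φ.injective.eq_iff,
    QuotientGroup.eq_one_iff]

theorem one_mk_mem_graph {h : G'} : (1, h) ∈ graph N M φ ↔ h ∈ M := by
  rw [mk_mem_graph, QuotientGroup.mk_one, map_one, eq_comm, QuotientGroup.eq_one_iff]

theorem exists_mk_mem_graph_right (g : G) : ∃ h, (g, h) ∈ graph N M φ :=
  (QuotientGroup.mk_surjective (φ g)).imp fun _ h => h.symm

theorem exists_mk_mem_graph_left (h : G') : ∃ g, (g, h) ∈ graph N M φ :=
  (QuotientGroup.mk_surjective (φ.symm h)).imp fun _ hg => by simp [hg]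

theorem mem_bwd_iff {S : Set G'} {g : G} : g ∈ bwd N M φ S ↔ ∃ h ∈ S, (g, h) ∈ graph N M φ :=
  Iff.rfl

theorem mem_fwd_iff {S : Set G} {h : G'} : h ∈ fwd N M φ S ↔ ∃ g ∈ S, (g, h) ∈ graph N M φ :=
  Iff.rfl

theorem mem_atom_iff {p : G × G'} {a : G} : p ∈ atom N M φ a ↔ (p.1 * a, p.2) ∈ graph N M φ := by
  simp [atom, eq_comm]

theorem bwd_smul {x₀ : G} {h₀ : G'} (h : (x₀, h₀) ∈ graph N M φ) (S : Set G') :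
    bwd N M φ (h₀ • S) = x₀ • bwd N M φ S := by
  have key (y : G) (s : G') : (y, h₀ * s) ∈ graph N M φ ↔ (x₀⁻¹ * y, s) ∈ graph N M φ := by
    rw [← (graph N M φ).mul_mem_cancel_left (inv_mem h), Prod.inv_mk, Prod.mk_mul_mk,
      inv_mul_cancel_left]
  ext x
  rw [mem_leftCoset_iff]
  constructor
  · rintro ⟨_, ⟨s, hs, rfl⟩, hx⟩
    exact ⟨s, hs, (key x s).mp hx⟩
  · rintro ⟨s, hs, hx⟩
    exact ⟨h₀ * s, Set.smul_mem_smul_set hs, (key x s).mpr hx⟩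

theorem bwd_cosetOf_mul_cosetOf (K : Subgroup G') {a x : G} {b : G'} (hx : (x, b) ∈ graph N M φ) :
    bwd N M φ (cosetOf M (φ a) * cosetOf K b) = (a * x) • bwd N M φ ((M : Set G') * K) := by
  obtain ⟨u, hu⟩ := exists_mk_mem_graph_right φ a
  rw [(mk_mem_graph φ).mp hu, cosetOf_mul_cosetOf, bwd_smul φ ((graph N M φ).mul_mem hu hx)]

theorem atom_one : atom N M φ 1 = graph N M φ := by
  ext ⟨g, h⟩
  simp [atom, eq_comm]

theorem graph_le_of_coe_eq_iUnion_atom {Δ : Subgroup (G × G')} {S : Set (G ⧸ N)}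
    (hΔ : (Δ : Set (G × G')) = ⋃ c ∈ S, atom N M φ c) : graph N M φ ≤ Δ := by
  have hS : (1 : G ⧸ N) ∈ S := by
    have h1 : (1 : G × G') ∈ (Δ : Set (G × G')) := Δ.one_mem
    rw [hΔ] at h1
    obtain ⟨c, hc, h1⟩ := Set.mem_iUnion₂.mp h1
    have : φ c = 1 := by simpa [atom, eq_comm] using h1
    rwa [← φ.map_eq_one_iff.mp this]
  intro p hp
  rw [← SetLike.mem_coe, hΔ]
  exact Set.mem_iUnion₂.mpr ⟨1, hS, atom_one φ ▸ hp⟩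

theorem setOf_mul_mem_eq_unionAtoms {Δ : Subgroup (G × G')} (hΔ : graph N M φ ≤ Δ) (t : G) :
    {p : G × G' | (p.1 * t, p.2) ∈ Δ} = unionAtoms N M φ (t • {c | (c, 1) ∈ Δ}) := by
  ext ⟨g, k⟩
  simp only [unionAtoms, Set.mem_iUnion, exists_prop, Set.mem_ofPred_eq]
  constructor
  · intro hgk
    obtain ⟨x, hx⟩ := exists_mk_mem_graph_left φ k
    refine ⟨(g⁻¹ * x : G), fun y hy => ?_, (mem_atom_iff φ).mpr (by simpa using hx)⟩
    have hy : ((g⁻¹ * x)⁻¹ * y, 1) ∈ Δ :=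
      hΔ ((mk_one_mem_graph φ).mpr (QuotientGroup.eq.mp hy.symm))
    rw [mem_leftCoset_iff]
    simpa [mul_assoc] using Δ.mul_mem (Δ.mul_mem (Δ.inv_mem hgk) (hΔ hx)) hy
  · rintro ⟨c, hc, hgk⟩
    obtain ⟨c, rfl⟩ := QuotientGroup.mk_surjective c
    have hc : (t⁻¹ * c, 1) ∈ Δ := mem_leftCoset_iff t |>.mp (hc rfl)
    simpa [mul_assoc] using Δ.mul_mem (hΔ ((mem_atom_iff φ).mp hgk)) (Δ.inv_mem hc)

end Graph

section Composition

variable {G₁ G₂ G₃ : Type*} [Group G₁] [Group G₂] [Group G₃]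
  {N₁ : Subgroup G₁} {M₁ N₂ : Subgroup G₂} {M₂ : Subgroup G₃} {N₃ : Subgroup G₁} {M₃ : Subgroup G₃}
  [N₁.Normal] [M₁.Normal] [N₂.Normal] [M₂.Normal] [N₃.Normal] [M₃.Normal]
  (φ₁ : G₁ ⧸ N₁ ≃* G₂ ⧸ M₁) (φ₂ : G₂ ⧸ N₂ ≃* G₃ ⧸ M₂) (φ₃ : G₁ ⧸ N₃ ≃* G₃ ⧸ M₃)

theorem mk_one_mem_rcompSubgroup_graph_iff {g : G₁} :
    (g, 1) ∈ rcompSubgroup (graph N₁ M₁ φ₁) (graph N₂ M₂ φ₂) ↔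
      g ∈ bwd N₁ M₁ φ₁ ((M₁ : Set G₂) * N₂) := by
  rw [mem_rcompSubgroup, mem_bwd_iff]
  constructor
  · rintro ⟨n, hgn, hn⟩
    exact ⟨n, Set.mem_mul.mpr ⟨1, M₁.one_mem, n, (mk_one_mem_graph φ₂).mp hn, one_mul n⟩, hgn⟩
  · rintro ⟨_, ⟨m, hm, n, hn, rfl⟩, hg⟩
    refine ⟨n, ?_, (mk_one_mem_graph φ₂).mpr hn⟩
    have hm : (1, m) ∈ graph N₁ M₁ φ₁ := (one_mk_mem_graph φ₁).mpr hm
    simpa using (graph N₁ M₁ φ₁).mul_mem ((graph N₁ M₁ φ₁).inv_mem hm) hg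

theorem one_mk_mem_rcompSubgroup_graph_iff {k : G₃} :
    (1, k) ∈ rcompSubgroup (graph N₁ M₁ φ₁) (graph N₂ M₂ φ₂) ↔
      k ∈ fwd N₂ M₂ φ₂ ((M₁ : Set G₂) * N₂) := by
  rw [mem_rcompSubgroup, mem_fwd_iff]
  constructor
  · rintro ⟨m, hm, hmk⟩
    exact ⟨m, Set.mem_mul.mpr ⟨m, (one_mk_mem_graph φ₁).mp hm, 1, N₂.one_mem, mul_one m⟩, hmk⟩
  · rintro ⟨_, ⟨m, hm, n, hn, rfl⟩, hk⟩
    refine ⟨m, (one_mk_mem_graph φ₁).mpr hm, ?_⟩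
    have hn : (n, 1) ∈ graph N₂ M₂ φ₂ := (mk_one_mem_graph φ₂).mpr hn
    simpa using (graph N₂ M₂ φ₂).mul_mem hk ((graph N₂ M₂ φ₂).inv_mem hn)

theorem rcomp_atom_eq {a x : G₁} {b : G₂} (hx : (x, b) ∈ graph N₁ M₁ φ₁) :
    rcomp (atom N₁ M₁ φ₁ a) (atom N₂ M₂ φ₂ b) =
      {p | (p.1 * (a * x), p.2) ∈ rcompSubgroup (graph N₁ M₁ φ₁) (graph N₂ M₂ φ₂)} := by
  have shift (g : G₁) (h : G₂) :
      (g * a, h) ∈ graph N₁ M₁ φ₁ ↔ (g * (a * x), h * b) ∈ graph N₁ M₁ φ₁ := by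
    rw [← (graph N₁ M₁ φ₁).mul_mem_cancel_right hx, Prod.mk_mul_mk, mul_assoc]
  ext ⟨g, k⟩
  simp only [rcomp, Set.mem_ofPred_eq, mem_atom_iff, mem_rcompSubgroup]
  constructor
  · rintro ⟨h, hgh, hhk⟩
    exact ⟨h * b, (shift g h).mp hgh, hhk⟩
  · rintro ⟨h, hgh, hhk⟩
    exact ⟨h * b⁻¹, (shift g _).mpr (by simpa using hgh), by simpa using hhk⟩

theorem graph_le_rcompSubgroup_graph_iff :
    graph N₃ M₃ φ₃ ≤ rcompSubgroup (graph N₁ M₁ φ₁) (graph N₂ M₂ φ₂) ↔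
      (N₃ : Set G₁) ⊆ bwd N₁ M₁ φ₁ ((M₁ : Set G₂) * N₂) ∧
        ∀ (g : G₁) (h : G₂) (k k' : G₃),
          φ₁ (g : G₁ ⧸ N₁) = (h : G₂ ⧸ M₁) → φ₂ (h : G₂ ⧸ N₂) = (k : G₃ ⧸ M₂) →
          φ₃ (g : G₁ ⧸ N₃) = (k' : G₃ ⧸ M₃) →
          k⁻¹ * k' ∈ fwd N₂ M₂ φ₂ ((M₁ : Set G₂) * N₂) := by
  set Δ := rcompSubgroup (graph N₁ M₁ φ₁) (graph N₂ M₂ φ₂)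
  have mem_Δ {g : G₁} {h : G₂} {k : G₃} (hgh : φ₁ g = h) (hhk : φ₂ h = k) : (g, k) ∈ Δ :=
    ⟨h, hgh, hhk⟩
  constructor
  · intro hle
    refine ⟨fun n hn => (mk_one_mem_rcompSubgroup_graph_iff φ₁ φ₂).mp
      (hle ((mk_one_mem_graph φ₃).mpr hn)), fun g h k k' hgh hhk hgk' => ?_⟩
    rw [← one_mk_mem_rcompSubgroup_graph_iff φ₁]
    have hgk' : (g, k') ∈ Δ := hle (show (g, k') ∈ graph N₃ M₃ φ₃ from hgk')
    simpa using Δ.mul_mem (Δ.inv_mem (mem_Δ hgh hhk)) hgk'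
  · rintro ⟨-, hQ⟩ ⟨g, k'⟩ hgk'
    obtain ⟨h, hgh⟩ := exists_mk_mem_graph_right φ₁ g
    obtain ⟨k, hhk⟩ := exists_mk_mem_graph_right φ₂ h
    have hk := (one_mk_mem_rcompSubgroup_graph_iff φ₁ φ₂).mpr (hQ g h k k' hgh hhk hgk')
    simpa using Δ.mul_mem (mem_Δ hgh hhk) hk

end Composition

/-- **Composition Theorem.** -/
theorem composition_theorem {G₁ G₂ G₃ : Type*} [Group G₁] [Group G₂] [Group G₃]
    (N₁ : Subgroup G₁) (M₁ : Subgroup G₂) (N₂ : Subgroup G₂) (M₂ : Subgroup G₃)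
    (N₃ : Subgroup G₁) (M₃ : Subgroup G₃)
    [N₁.Normal] [M₁.Normal] [N₂.Normal] [M₂.Normal] [N₃.Normal] [M₃.Normal]
    (φ₁ : G₁ ⧸ N₁ ≃* G₂ ⧸ M₁) (φ₂ : G₂ ⧸ N₂ ≃* G₃ ⧸ M₂) (φ₃ : G₁ ⧸ N₃ ≃* G₃ ⧸ M₃) :
    List.TFAE
      [ (∃ S : Set (G₁ ⧸ N₃),
          rcomp (atom N₁ M₁ φ₁ 1) (atom N₂ M₂ φ₂ 1) = ⋃ c ∈ S, atom N₃ M₃ φ₃ c),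
        (∀ (a : G₁ ⧸ N₁) (b : G₂ ⧸ N₂), ∃ S : Set (G₁ ⧸ N₃),
          rcomp (atom N₁ M₁ φ₁ a) (atom N₂ M₂ φ₂ b) = ⋃ c ∈ S, atom N₃ M₃ φ₃ c),
        (∀ (a : G₁ ⧸ N₁) (b : G₂ ⧸ N₂),
          rcomp (atom N₁ M₁ φ₁ a) (atom N₂ M₂ φ₂ b) =
            ⋃ c ∈ {c : G₁ ⧸ N₃ |
                cosetOf N₃ c ⊆ bwd N₁ M₁ φ₁ (cosetOf M₁ (φ₁ a) * cosetOf N₂ b)},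
              atom N₃ M₃ φ₃ c),
        ((N₃ : Set G₁) ⊆ bwd N₁ M₁ φ₁ ((M₁ : Set G₂) * (N₂ : Set G₂)) ∧
          ∀ (g : G₁) (h : G₂) (k k' : G₃),
            φ₁ (g : G₁ ⧸ N₁) = (h : G₂ ⧸ M₁) → φ₂ (h : G₂ ⧸ N₂) = (k : G₃ ⧸ M₂) →
            φ₃ (g : G₁ ⧸ N₃) = (k' : G₃ ⧸ M₃) →
            k⁻¹ * k' ∈ fwd N₂ M₂ φ₂ ((M₁ : Set G₂) * (N₂ : Set G₂))) ] := by
  tfae_have 2 → 1 := fun h => h 1 1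
  tfae_have 3 → 2 := fun h a b => ⟨_, h a b⟩
  tfae_have 1 → 4 := by
    rintro ⟨S, hS⟩
    rw [atom_one, atom_one] at hS
    exact (graph_le_rcompSubgroup_graph_iff φ₁ φ₂ φ₃).mp (graph_le_of_coe_eq_iUnion_atom φ₃ hS)
  tfae_have 4 → 3 := by
    intro h a b
    obtain ⟨a, rfl⟩ := QuotientGroup.mk_surjective a
    obtain ⟨b, rfl⟩ := QuotientGroup.mk_surjective b
    obtain ⟨x, hx⟩ := exists_mk_mem_graph_left φ₁ b
    have hL : bwd N₁ M₁ φ₁ ((M₁ : Set G₂) * N₂) =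
        {c | (c, 1) ∈ rcompSubgroup (graph N₁ M₁ φ₁) (graph N₂ M₂ φ₂)} :=
      Set.ext fun c => (mk_one_mem_rcompSubgroup_graph_iff φ₁ φ₂).symm
    rw [rcomp_atom_eq φ₁ φ₂ hx, bwd_cosetOf_mul_cosetOf φ₁ N₂ hx, hL]
    exact setOf_mul_mem_eq_unionAtoms φ₃ ((graph_le_rcompSubgroup_graph_iff φ₁ φ₂ φ₃).mpr h) _
  tfae_finish

end CosetRA
end

section
/- Assume the pre-semi-frame conditions (SF3): φ₁[N₁·N₃] = M₁·N₂, φ₂[M₁·N₂] = M₃·M₂, and φ₃[N₁·N₃] = M₃·M₂. Let C ⊆ G₁ be a left coset of N₁·N₃ and C″ ⊆ G₃ a left coset of M₂·M₃, and define, for u ∈ G₃⧸M₂ and v ∈ G₂⧸M₁, the reversed product R̃²_u ⊗_{C″} R̃¹_v := ⋃{R̃³_w : w ∈ G₃⧸M₃, ⟨w⟩ ⊆ φ₂[⟨φ₂⁻¹(u)⟩·⟨v⟩]·C″}. If the second involution law holds for all atoms, i.e. (R¹_a ⊗_C R²_b)˘ = R̃²_{φ₂(b⁻¹)} ⊗_{C″}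 R̃¹_{φ₁(a⁻¹)} for all a ∈ G₁⧸N₁ and b ∈ G₂⧸N₂, then the semi-frame condition (SF4) holds: for every Q ⊆ G₁ that is a union of left cosets of N₁·N₃, φ₂[φ₁[Q]] = φ₃[C⁻¹·Q·C]. (Semi-frame Corollary.) -/
/-! By (SF3) each of φ₁, φ₂, φ₃ carries left cosets of N₁N₃, M₁N₂, M₃M₂ onto left cosets, so both
sides of (SF4) are unions, over g ∈ Q, of single cosets of P₃ = M₃M₂ and can be compared in
G₃ ⧸ P₃. Write C = g₀N₁N₃ and C'' = k₀M₃M₂. The pair (1, φ₃[g g₀]) lies in the left side of the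
involution law for a = [g], b = 1; reading it off the right side gives [φ₂φ₁ g] = [k₀]·[φ₃(g g₀)]
in G₃ ⧸ P₃. At g = 1 this says [k₀] = [φ₃ g₀]⁻¹, so φ₂φ₁ g and φ₃(g₀⁻¹ g g₀) lie in the same
coset of P₃. -/

open scoped Pointwise

namespace CosetRA

variable {G G' : Type*}

section Quotients

variable [Group G] [Group G'] {N : Subgroup G} {M : Subgroup G'}
  [N.Normal] [M.Normal] (φ : G ⧸ N ≃* G' ⧸ M)

theorem cosetOf_one : cosetOf N 1 = N := by
  ext g
  exact QuotientGroup.eq_one_iff g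

theorem fwd_mono {S T : Set G} (h : S ⊆ T) : fwd N M φ S ⊆ fwd N M φ T :=
  fun _ ⟨g, hg, hgx⟩ => ⟨g, h hg, hgx⟩

theorem fwd_iUnion {ι : Sort*} (S : ι → Set G) :
    fwd N M φ (⋃ i, S i) = ⋃ i, fwd N M φ (S i) := by
  ext x
  simp only [fwd, Set.mem_iUnion, Set.mem_ofPred_eq]
  exact ⟨fun ⟨g, ⟨i, hg⟩, hgx⟩ => ⟨i, g, hg, hgx⟩, fun ⟨i, g, hg, hgx⟩ => ⟨g, ⟨i, hg⟩, hgx⟩⟩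

theorem fwd_smul {g : G} {h : G'} (hgh : φ g = h) (S : Set G) :
    fwd N M φ (g • S) = h • fwd N M φ S := by
  ext x
  simp only [fwd, Set.mem_smul_set, Set.mem_ofPred_eq, smul_eq_mul]
  constructor
  · rintro ⟨_, ⟨s, hs, rfl⟩, hsx⟩
    refine ⟨h⁻¹ * x, ⟨s, hs, ?_⟩, mul_inv_cancel_left h x⟩
    rw [QuotientGroup.mk_mul, map_mul, hgh] at hsx
    rw [QuotientGroup.mk_mul, QuotientGroup.mk_inv, ← hsx, inv_mul_cancel_left]
  · rintro ⟨y, ⟨s, hs, hsy⟩, rfl⟩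
    exact ⟨g * s, ⟨s, hs, rfl⟩, by rw [QuotientGroup.mk_mul, map_mul, hgh, hsy]; rfl⟩

theorem one_mk_mem_unionAtoms_iff {K : Set G} {k : G'} :
    ((1, k) ∈ unionAtoms N M φ K) ↔ cosetOf N (φ.symm k) ⊆ K := by
  simp only [unionAtoms, atom, Set.mem_iUnion, Set.mem_ofPred_eq, exists_prop,
    QuotientGroup.mk_one, map_one, one_mul]
  constructor
  · rintro ⟨c, hc, hkc⟩
    rwa [hkc, φ.symm_apply_apply]
  · exact fun hK => ⟨_, hK, (φ.apply_symm_apply _).symm⟩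

theorem mk_one_mem_unionAtoms_iff {K : Set G} {g : G} :
    ((g, 1) ∈ unionAtoms N M φ K) ↔ cosetOf N (g : G ⧸ N)⁻¹ ⊆ K := by
  simp only [unionAtoms, atom, Set.mem_iUnion, Set.mem_ofPred_eq, exists_prop,
    QuotientGroup.mk_one, ← map_mul, eq_comm (a := (1 : G' ⧸ M)), MulEquiv.map_eq_one_iff,
    mul_eq_one_iff_eq_inv']
  constructor
  · rintro ⟨c, hc, rfl⟩
    exact hc
  · exact fun hK => ⟨_, hK, rfl⟩

end Quotients

section Cosets

variable [Group G] {K : Subgroup G}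

theorem mem_smul_iff_mk_eq {a x : G} : x ∈ a • (K : Set G) ↔ (a : G ⧸ K) = x := by
  rw [mem_leftCoset_iff, QuotientGroup.eq, SetLike.mem_coe]

theorem IsUnionOfCosets.eq_biUnion {Q : Set G} (hQ : IsUnionOfCosets (K : Set G) Q) :
    Q = ⋃ g ∈ Q, g • (K : Set G) := by
  refine subset_antisymm (fun g hg => ?_) (Set.iUnion₂_subset hQ)
  exact Set.mem_biUnion hg (mem_smul_iff_mk_eq.2 rfl)

theorem smul_inv_mul_mul_smul_eq_biUnion [K.Normal] (g₀ : G) (Q : Set G) :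
    (g₀ • (K : Set G))⁻¹ * Q * (g₀ • (K : Set G)) = ⋃ g ∈ Q, (g₀⁻¹ * g * g₀) • (K : Set G) := by
  ext x
  simp only [Set.mem_iUnion, mem_smul_iff_mk_eq, Set.mem_mul, Set.mem_inv, exists_prop]
  constructor
  · rintro ⟨_, ⟨c₁, hc₁, q, hq, rfl⟩, c₂, hc₂, rfl⟩
    have hc₁' : (c₁ : G ⧸ K) = (g₀ : G ⧸ K)⁻¹ := by rw [hc₁, QuotientGroup.mk_inv, inv_inv]
    refine ⟨q, hq, ?_⟩
    simp only [QuotientGroup.mk_mul, QuotientGroup.mk_inv, hc₁', hc₂]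
  · rintro ⟨g, hg, hx⟩
    refine ⟨g₀⁻¹ * g, ⟨g₀⁻¹, by rw [inv_inv], g, hg, rfl⟩, (g₀⁻¹ * g)⁻¹ * x, ?_, by group⟩
    simp only [QuotientGroup.mk_mul, QuotientGroup.mk_inv, ← hx]
    group

theorem mul_cosetOf_inv_subset_smul {P N M : Subgroup G} [P.Normal] [M.Normal] (hN : N ≤ P)
    (hM : M ≤ P) (h : G) : (N : Set G) * cosetOf M (h : G ⧸ M)⁻¹ ⊆ h⁻¹ • (P : Set G) := by
  rintro _ ⟨n, hn, m, hm, rfl⟩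
  have hhm : h * m ∈ M := by
    rw [← QuotientGroup.eq_one_iff, QuotientGroup.mk_mul, hm, mul_inv_cancel]
  rw [mem_leftCoset_iff, inv_inv, show h * (n * m) = h * n * h⁻¹ * (h * m) by group]
  exact P.mul_mem (‹P.Normal›.conj_mem n (hN hn) h) (hM hhm)

end Cosets

section SemiFrame

variable {G₁ G₂ G₃ : Type*} [Group G₁] [Group G₂] [Group G₃]
  {N₁ N₃ : Subgroup G₁} {M₁ N₂ : Subgroup G₂} {M₂ M₃ : Subgroup G₃}
  [N₁.Normal] [M₁.Normal] [N₂.Normal] [M₂.Normal] [N₃.Normal] [M₃.Normal]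
  {φ₁ : G₁ ⧸ N₁ ≃* G₂ ⧸ M₁} {φ₂ : G₂ ⧸ N₂ ≃* G₃ ⧸ M₂} {φ₃ : G₁ ⧸ N₃ ≃* G₃ ⧸ M₃}
  {P₁ : Subgroup G₁} {P₂ : Subgroup G₂} {P₃ : Subgroup G₃}

theorem mk_eq_mk_mul_mk_of_involution [P₂.Normal] [P₃.Normal] (hN₃ : N₃ ≤ P₁) (hM₁ : M₁ ≤ P₂)
    (hN₂ : N₂ ≤ P₂) (hP₂ : fwd N₂ M₂ φ₂ P₂ = P₃) {g₀ g : G₁} {k₀ : G₃}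
    (hInv : conv (unionAtoms N₃ M₃ φ₃
        (bwd N₁ M₁ φ₁ (cosetOf M₁ (φ₁ g) * N₂) * g₀ • (P₁ : Set G₁))) =
      unionAtoms M₃ N₃ φ₃.symm
        (fwd N₂ M₂ φ₂ (N₂ * cosetOf M₁ (φ₁ g)⁻¹) * k₀ • (P₃ : Set G₃)))
    {h : G₂} {k₁ k₂ : G₃} (hgh : φ₁ g = h) (hhk₁ : φ₂ h = k₁) (hk₂ : φ₃ ↑(g * g₀) = k₂) :
    (k₁ : G₃ ⧸ P₃) = k₀ * k₂ := by
  have hcoset : cosetOf N₃ (φ₃.symm k₂) ⊆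
      bwd N₁ M₁ φ₁ (cosetOf M₁ (φ₁ g) * N₂) * g₀ • (P₁ : Set G₁) := by
    intro x hx
    rw [← hk₂, MulEquiv.symm_apply_apply] at hx
    have hn : (g * g₀)⁻¹ * x ∈ N₃ := QuotientGroup.eq.mp hx.symm
    refine ⟨g, ⟨h, ⟨h, hgh.symm, 1, N₂.one_mem, mul_one h⟩, hgh⟩, g₀ * ((g * g₀)⁻¹ * x),
      Set.smul_mem_smul_set (hN₃ hn), by group⟩
  have hmem : (k₂, 1) ∈ unionAtoms M₃ N₃ φ₃.symm
      (fwd N₂ M₂ φ₂ (N₂ * cosetOf M₁ (φ₁ g)⁻¹) * k₀ • (P₃ : Set G₃)) :=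
    hInv ▸ (one_mk_mem_unionAtoms_iff φ₃).2 hcoset
  obtain ⟨y, hy, c, hc, hyc⟩ :=
    (mk_one_mem_unionAtoms_iff φ₃.symm).1 hmem (QuotientGroup.mk_inv _ k₂)
  have hy' : y ∈ k₁⁻¹ • (P₃ : Set G₃) := by
    rw [← hP₂, ← fwd_smul φ₂ (by rw [QuotientGroup.mk_inv, map_inv, hhk₁, QuotientGroup.mk_inv])]
    exact fwd_mono φ₂ (mul_cosetOf_inv_subset_smul hN₂ hM₁ h) (hgh ▸ hy)
  rw [mem_smul_iff_mk_eq] at hy' hc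
  have hk₂inv : (k₂ : G₃ ⧸ P₃)⁻¹ = (k₁ : G₃ ⧸ P₃)⁻¹ * k₀ := by
    rw [← QuotientGroup.mk_inv, ← hyc, QuotientGroup.mk_mul, ← hy', ← hc, QuotientGroup.mk_inv]
  rw [eq_inv_mul_iff_mul_eq] at hk₂inv
  rw [← hk₂inv, inv_mul_cancel_right]

theorem fwd_fwd_smul_eq_fwd_conj_smul [P₂.Normal] [P₃.Normal] (hN₃ : N₃ ≤ P₁) (hM₁ : M₁ ≤ P₂)
    (hN₂ : N₂ ≤ P₂) (h₁ : fwd N₁ M₁ φ₁ P₁ = P₂) (h₂ : fwd N₂ M₂ φ₂ P₂ = P₃)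
    (h₃ : fwd N₃ M₃ φ₃ P₁ = P₃) {g₀ : G₁} {k₀ : G₃}
    (hInv : ∀ g : G₁, conv (unionAtoms N₃ M₃ φ₃
        (bwd N₁ M₁ φ₁ (cosetOf M₁ (φ₁ g) * N₂) * g₀ • (P₁ : Set G₁))) =
      unionAtoms M₃ N₃ φ₃.symm
        (fwd N₂ M₂ φ₂ (N₂ * cosetOf M₁ (φ₁ g)⁻¹) * k₀ • (P₃ : Set G₃)))
    (g : G₁) :
    fwd N₂ M₂ φ₂ (fwd N₁ M₁ φ₁ (g • (P₁ : Set G₁))) =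
      fwd N₃ M₃ φ₃ ((g₀⁻¹ * g * g₀) • (P₁ : Set G₁)) := by
  obtain ⟨h, hgh⟩ := QuotientGroup.mk_surjective (φ₁ g)
  obtain ⟨k₁, hhk₁⟩ := QuotientGroup.mk_surjective (φ₂ h)
  obtain ⟨k₂, hk₂⟩ := QuotientGroup.mk_surjective (φ₃ ↑(g * g₀))
  obtain ⟨k₃, hk₃⟩ := QuotientGroup.mk_surjective (φ₃ g₀)
  have hk₃inv : φ₃ ↑g₀⁻¹ = ↑k₃⁻¹ := by
    rw [QuotientGroup.mk_inv, map_inv, ← hk₃, QuotientGroup.mk_inv]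
  rw [fwd_smul φ₁ hgh.symm, h₁, fwd_smul φ₂ hhk₁.symm, h₂, mul_assoc, mul_smul,
    fwd_smul φ₃ hk₃inv, fwd_smul φ₃ hk₂.symm, h₃, smul_smul, leftCoset_eq_iff,
    ← QuotientGroup.eq]
  have hk₁ := mk_eq_mk_mul_mk_of_involution hN₃ hM₁ hN₂ h₂ (hInv g) hgh.symm hhk₁.symm hk₂.symm
  have hk₀ : (k₀ : G₃ ⧸ P₃) * k₃ = 1 :=
    (mk_eq_mk_mul_mk_of_involution hN₃ hM₁ hN₂ h₂ (hInv 1) (h := 1) (by simp) (by simp)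
      (by rw [one_mul]; exact hk₃.symm)).symm
  rw [QuotientGroup.mk_mul, QuotientGroup.mk_inv, hk₁, inv_eq_of_mul_eq_one_left hk₀]

end SemiFrame

/-- **Semi-frame Corollary** (second involution law case): if the second
involution law holds for all atoms, then semi-frame condition (iv) holds. -/
theorem semiframe_corollary {G₁ G₂ G₃ : Type*} [Group G₁] [Group G₂] [Group G₃]
    (N₁ : Subgroup G₁) (M₁ : Subgroup G₂) (N₂ : Subgroup G₂) (M₂ : Subgroup G₃)
    (N₃ : Subgroup G₁) (M₃ : Subgroup G₃)
    [N₁.Normal] [M₁.Normal] [N₂.Normal] [M₂.Normal] [N₃.Normal] [M₃.Normal]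
    (φ₁ : G₁ ⧸ N₁ ≃* G₂ ⧸ M₁) (φ₂ : G₂ ⧸ N₂ ≃* G₃ ⧸ M₂) (φ₃ : G₁ ⧸ N₃ ≃* G₃ ⧸ M₃)
    (hSF3a : fwd N₁ M₁ φ₁ ((N₁ : Set G₁) * (N₃ : Set G₁)) = (M₁ : Set G₂) * (N₂ : Set G₂))
    (hSF3b : fwd N₂ M₂ φ₂ ((M₁ : Set G₂) * (N₂ : Set G₂)) = (M₃ : Set G₃) * (M₂ : Set G₃))
    (hSF3c : fwd N₃ M₃ φ₃ ((N₁ : Set G₁) * (N₃ : Set G₁)) = (M₃ : Set G₃) * (M₂ : Set G₃))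
    (C : Set G₁) (hC : IsLeftCosetSet ((N₁ : Set G₁) * (N₃ : Set G₁)) C)
    (C'' : Set G₃) (hC'' : IsLeftCosetSet ((M₂ : Set G₃) * (M₃ : Set G₃)) C'')
    (hInv : ∀ (a : G₁ ⧸ N₁) (b : G₂ ⧸ N₂),
      conv (unionAtoms N₃ M₃ φ₃
          (bwd N₁ M₁ φ₁ (cosetOf M₁ (φ₁ a) * cosetOf N₂ b) * C)) =
        unionAtoms M₃ N₃ φ₃.symm
          (fwd N₂ M₂ φ₂
            (cosetOf N₂ (φ₂.symm (φ₂ b⁻¹)) * cosetOf M₁ (φ₁ a⁻¹)) * C'')) :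
    ∀ Q : Set G₁, IsUnionOfCosets ((N₁ : Set G₁) * (N₃ : Set G₁)) Q →
      fwd N₂ M₂ φ₂ (fwd N₁ M₁ φ₁ Q) = fwd N₃ M₃ φ₃ (C⁻¹ * Q * C) := by
  intro Q hQ
  obtain ⟨g₀, rfl⟩ := hC
  obtain ⟨k₀, rfl⟩ := hC''
  simp only [← Subgroup.mul_normal] at hSF3a hSF3b hSF3c hQ hInv ⊢
  rw [sup_comm M₂] at hInv
  have hcoset := fwd_fwd_smul_eq_fwd_conj_smul le_sup_right le_sup_left le_sup_right
    hSF3a hSF3b hSF3c (fun g => by simpa [cosetOf_one] using hInv g 1)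
  rw [smul_inv_mul_mul_smul_eq_biUnion]
  conv_lhs => rw [hQ.eq_biUnion]
  simp only [fwd_iUnion, hcoset]

end CosetRA
end
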